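/- For all y in ℝ, the integral ∫_{|y|}^∞ Φ(-s) · (2y²)/(s²√(s²-y²)) ds equals e^{-y²/2} - √(2π)·|y|·Φ(-|y|), where Φ is the standard normal CDF. -/

import Mathlib

open MeasureTheory Set

/-- The standard normal cumulative distribution function. -/
noncomputable def gaussCdf (x : ℝ) : ℝ :=
  (1 / Real.sqrt (2 * Real.pi)) * ∫ t in Set.Iio x, Real.exp (-t ^ 2 / 2)

/-!
The kernel is the derivative of `2 √(s² - y²) / s`, which vanishes at `s = |y|` and tends to `2`,
so integrating by parts against the Gaussian tail `Φ(-s)` turns the left side into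
`(2π)^{-1/2} ∫_{|y|}^∞ e^{-s²/2} · 2 √(s² - y²) / s ds`. The substitution `s = √(x² + y²)` makes
this `(2π)^{-1/2} ∫_0^∞ e^{-(x² + y²)/2} (2 - 2y² / (x² + y²)) dx`. The remaining
Gaussian–Cauchy integral `∫_0^∞ e^{-(x² + y²)/2} / (x² + y²) dx = π Φ(-|y|) / |y|` follows by
writing `e^{-c/2} / c = ∫_1^∞ t e^{-c t²/2} dt` and integrating over `x` first.
-/

open Real Filter Topology

theorem hasDerivAt_integral_Ioi {E : Type*} [NormedAddCommGroup E] [NormedSpace ℝ E]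
    [CompleteSpace E] {f : ℝ → E} (hf : Integrable f) (hc : Continuous f) (x : ℝ) :
    HasDerivAt (fun s ↦ ∫ t in Ioi s, f t) (-f x) x := by
  have h : (fun s ↦ ∫ t in Ioi s, f t) = fun s ↦ (∫ t in Ioi 0, f t) - ∫ t in 0..s, f t := by
    funext s
    rw [← intervalIntegral.integral_Ioi_sub_Ioi' hf.integrableOn hf.integrableOn, sub_sub_cancel]
  rw [h]
  exact ((hc.integral_hasStrictDerivAt 0 x).hasDerivAt).const_sub _

theorem integral_Ioi_mul_exp_neg_mul_sq {c : ℝ} (hc : 0 < c) (b : ℝ) :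
    ∫ t in Ioi b, t * exp (-c * t ^ 2) = exp (-c * b ^ 2) / (2 * c) := by
  have hderiv : ∀ t ∈ Ici b,
      HasDerivAt (fun t ↦ -exp (-c * t ^ 2) / (2 * c)) (t * exp (-c * t ^ 2)) t := by
    intro t _
    refine ((((hasDerivAt_pow 2 t).const_mul (-c)).exp).neg.div_const (2 * c)).congr_deriv ?_
    field_simp
    norm_num
    ring
  have hlim : Tendsto (fun t ↦ -exp (-c * t ^ 2) / (2 * c)) atTop (𝓝 (-0 / (2 * c))) :=
    ((tendsto_exp_atBot.comp ((tendsto_pow_atTop two_ne_zero).const_mul_atTop_of_neg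
      (neg_lt_zero.2 hc))).neg.div_const _)
  rw [integral_Ioi_of_hasDerivAt_of_tendsto' hderiv (integrable_mul_exp_neg_mul_sq hc).integrableOn
    hlim]
  ring

theorem integral_comp_sqrt_sq_add_sq_Ioi {E : Type*} [NormedAddCommGroup E] [NormedSpace ℝ E]
    (g : ℝ → E) (a : ℝ) :
    ∫ x in Ioi 0, (x / √(x ^ 2 + a ^ 2)) • g √(x ^ 2 + a ^ 2) = ∫ s in Ioi |a|, g s := by
  have himage : (fun x ↦ √(x ^ 2 + a ^ 2)) '' Ioi 0 = Ioi |a| := by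
    ext s
    constructor
    · rintro ⟨x, hx, rfl⟩
      rw [mem_Ioi, lt_sqrt (abs_nonneg a), sq_abs]
      nlinarith [hx.out]
    · intro hs
      have hpos : 0 < s ^ 2 - a ^ 2 := by nlinarith [abs_nonneg a, sq_abs a, hs.out]
      refine ⟨√(s ^ 2 - a ^ 2), sqrt_pos.2 hpos, ?_⟩
      dsimp only
      rw [sq_sqrt hpos.le, sub_add_cancel, sqrt_sq ((abs_nonneg a).trans hs.out.le)]
  have hderiv : ∀ x ∈ Ioi (0 : ℝ),
      HasDerivWithinAt (fun x ↦ √(x ^ 2 + a ^ 2)) (x / √(x ^ 2 + a ^ 2)) (Ioi 0) x := by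
    intro x hx
    have hpos : 0 < x ^ 2 + a ^ 2 := by nlinarith [hx.out, sq_nonneg a]
    refine (((hasDerivAt_pow 2 x).add_const (a ^ 2)).sqrt hpos.ne').hasDerivWithinAt.congr_deriv ?_
    have hr0 : √(x ^ 2 + a ^ 2) ≠ 0 := (sqrt_pos.2 hpos).ne'
    field_simp
    norm_num
  have hmono : MonotoneOn (fun x ↦ √(x ^ 2 + a ^ 2)) (Ioi 0) := fun x hx y _ hxy ↦
    sqrt_le_sqrt (by nlinarith [hx.out])
  rw [← himage, integral_image_eq_integral_deriv_smul_of_monotoneOn measurableSet_Ioi hderiv hmono]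

theorem exp_neg_sq_div_two (t : ℝ) : exp (-t ^ 2 / 2) = exp (-(1 / 2) * t ^ 2) := by
  ring_nf

theorem integrable_exp_neg_sq_div_two : Integrable fun t : ℝ ↦ exp (-t ^ 2 / 2) := by
  simpa only [exp_neg_sq_div_two] using integrable_exp_neg_mul_sq (by norm_num : (0 : ℝ) < 1 / 2)

theorem integral_exp_neg_sq_div_two : ∫ t, exp (-t ^ 2 / 2) = √(2 * π) := by
  simp only [exp_neg_sq_div_two, integral_gaussian]
  congr 1
  field_simp

theorem integral_Ioi_zero_exp_neg_sq_div_two : ∫ t in Ioi 0, exp (-t ^ 2 / 2) = √(2 * π) / 2 := by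
  simp only [exp_neg_sq_div_two, integral_gaussian_Ioi]
  congr 2
  field_simp

theorem gaussCdf_neg (x : ℝ) :
    gaussCdf (-x) = (√(2 * π))⁻¹ * ∫ t in Ioi x, exp (-t ^ 2 / 2) := by
  rw [gaussCdf, one_div, ← integral_Iic_eq_integral_Iio, ← integral_comp_neg_Ioi]
  simp only [neg_sq]

theorem gaussCdf_nonneg (x : ℝ) : 0 ≤ gaussCdf x :=
  mul_nonneg (by positivity) (setIntegral_nonneg measurableSet_Iio fun t _ ↦ (exp_pos _).le)

theorem gaussCdf_le_one (x : ℝ) : gaussCdf x ≤ 1 := by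
  have h : ∫ t in Iio x, exp (-t ^ 2 / 2) ≤ √(2 * π) :=
    integral_exp_neg_sq_div_two ▸ setIntegral_le_integral integrable_exp_neg_sq_div_two
      (.of_forall fun t ↦ (exp_pos _).le)
  rw [gaussCdf, one_div, inv_mul_le_iff₀ (by positivity), mul_one]
  exact h

theorem hasDerivAt_gaussCdf_neg (x : ℝ) :
    HasDerivAt (fun s ↦ gaussCdf (-s)) (-((√(2 * π))⁻¹ * exp (-x ^ 2 / 2))) x := by
  simp only [gaussCdf_neg, ← mul_neg]
  exact (hasDerivAt_integral_Ioi integrable_exp_neg_sq_div_two (by fun_prop) x).const_mul _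

theorem continuous_gaussCdf_neg : Continuous fun s ↦ gaussCdf (-s) :=
  continuous_iff_continuousAt.2 fun x ↦ (hasDerivAt_gaussCdf_neg x).continuousAt

theorem tendsto_gaussCdf_neg_atTop : Tendsto (fun s ↦ gaussCdf (-s)) atTop (𝓝 0) := by
  simp only [gaussCdf_neg]
  simpa using (tendsto_integral_Ioi_zero (f := fun t ↦ exp (-t ^ 2 / 2)) tendsto_id).const_mul
    (√(2 * π))⁻¹

theorem integral_gaussCdf_neg_mul_deriv {v v' : ℝ → ℝ} {b l : ℝ}
    (hcont : ContinuousWithinAt v (Ici b) b) (hderiv : ∀ x ∈ Ioi b, HasDerivAt v (v' x) x)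
    (hv' : ∀ x ∈ Ioi b, 0 ≤ v' x) (hlim : Tendsto v atTop (𝓝 l)) :
    ∫ s in Ioi b, gaussCdf (-s) * v' s
      = (√(2 * π))⁻¹ * (∫ s in Ioi b, exp (-s ^ 2 / 2) * v s) - gaussCdf (-b) * v b := by
  have hcontOn : ContinuousOn v (Ici b) := by
    intro x hx
    rcases hx.out.eq_or_lt with rfl | hx
    · exact hcont
    · exact (hderiv x hx).continuousAt.continuousWithinAt
  have hmono : MonotoneOn v (Ici b) :=
    monotoneOn_of_hasDerivWithinAt_nonneg (convex_Ici b) hcontOn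
      (by simpa using fun x hx ↦ (hderiv x hx).hasDerivWithinAt) (by simpa using hv')
  have hbound : ∀ x ∈ Ioi b, ‖v x‖ ≤ max |v b| |l| := by
    intro x hx
    have hlow : v b ≤ v x := hmono self_mem_Ici hx.out.le hx.out.le
    have hup : v x ≤ l := ge_of_tendsto hlim <| (eventually_ge_atTop x).mono fun y hy ↦
      hmono hx.out.le (hx.out.le.trans hy) hy
    rw [Real.norm_eq_abs, abs_le]
    constructor
    · linarith [le_max_left |v b| |l|, neg_abs_le (v b)]
    · linarith [le_max_right |v b| |l|, le_abs_self l]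
  have huv' : IntegrableOn ((fun s ↦ gaussCdf (-s)) * v') (Ioi b) :=
    (integrableOn_Ioi_deriv_of_nonneg hcont hderiv hv' hlim).bdd_mul
      continuous_gaussCdf_neg.aestronglyMeasurable
      (.of_forall fun s ↦ by
        rw [Real.norm_eq_abs, abs_of_nonneg (gaussCdf_nonneg _)]; exact gaussCdf_le_one _)
  have hu'v : IntegrableOn ((fun s ↦ -((√(2 * π))⁻¹ * exp (-s ^ 2 / 2))) * v) (Ioi b) :=
    (integrable_exp_neg_sq_div_two.const_mul _).neg.integrableOn.mul_bdd
      ((hcontOn.mono Ioi_subset_Ici_self).aestronglyMeasurable measurableSet_Ioi)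
      ((ae_restrict_iff' measurableSet_Ioi).2 (.of_forall hbound))
  have h_zero : Tendsto ((fun s ↦ gaussCdf (-s)) * v) (𝓝[>] b) (𝓝 (gaussCdf (-b) * v b)) :=
    (continuous_gaussCdf_neg.continuousWithinAt.mul (hcont.mono Ioi_subset_Ici_self)).tendsto
  have h_infty : Tendsto ((fun s ↦ gaussCdf (-s)) * v) atTop (𝓝 0) := by
    have h := tendsto_gaussCdf_neg_atTop.mul hlim
    rwa [zero_mul] at h
  rw [integral_Ioi_mul_deriv_eq_deriv_mul (fun x _ ↦ hasDerivAt_gaussCdf_neg x) hderiv huv' hu'v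
    h_zero h_infty]
  simp only [neg_mul, integral_neg, mul_assoc, integral_const_mul]
  ring

theorem hasDerivAt_sqrt_sq_sub_sq_div {a s : ℝ} (hs : |a| < s) :
    HasDerivAt (fun s ↦ 2 * √(s ^ 2 - a ^ 2) / s) (2 * a ^ 2 / (s ^ 2 * √(s ^ 2 - a ^ 2))) s := by
  have hpos : 0 < s ^ 2 - a ^ 2 := by nlinarith [abs_nonneg a, sq_abs a]
  have hs0 : s ≠ 0 := ((abs_nonneg a).trans_lt hs).ne'
  have hsqrt := ((hasDerivAt_pow 2 s).sub_const (a ^ 2)).sqrt hpos.ne'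
  refine ((hsqrt.const_mul 2).div (hasDerivAt_id' s) hs0).congr_deriv ?_
  have hr : √(s ^ 2 - a ^ 2) ^ 2 = s ^ 2 - a ^ 2 := sq_sqrt hpos.le
  have hr0 : √(s ^ 2 - a ^ 2) ≠ 0 := (sqrt_pos.2 hpos).ne'
  field_simp
  rw [hr]
  norm_num
  ring

theorem tendsto_sqrt_sq_sub_sq_div_atTop (a : ℝ) :
    Tendsto (fun s ↦ 2 * √(s ^ 2 - a ^ 2) / s) atTop (𝓝 2) := by
  have h : Tendsto (fun s ↦ 2 * √(1 - (a / s) ^ 2)) atTop (𝓝 (2 * √(1 - 0 ^ 2))) :=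
    ((continuous_const.mul (continuous_const.sub (continuous_pow 2)).sqrt).tendsto 0).comp
      (tendsto_const_nhds.div_atTop tendsto_id)
  rw [zero_pow two_ne_zero, sub_zero, sqrt_one, mul_one] at h
  refine h.congr' ((eventually_gt_atTop 0).mono fun s hs ↦ ?_)
  rw [div_pow, one_sub_div (pow_pos hs 2).ne', sqrt_div' _ (sq_nonneg s), sqrt_sq hs.le]
  exact (mul_div_assoc _ _ _).symm

theorem exp_neg_half_div_eq_integral_Ioi_one {c : ℝ} (hc : 0 < c) :
    exp (-c / 2) / c = ∫ t in Ioi 1, t * exp (-(c / 2) * t ^ 2) := by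
  rw [integral_Ioi_mul_exp_neg_mul_sq (half_pos hc)]
  ring_nf

theorem exp_neg_sq_add_sq_mul_sq (a t x : ℝ) :
    exp (-((x ^ 2 + a ^ 2) / 2) * t ^ 2) = exp (-(a * t) ^ 2 / 2) * exp (-(t ^ 2 / 2) * x ^ 2) := by
  rw [← exp_add]; ring_nf

theorem integral_Ioi_zero_mul_exp_neg_sq_add_sq_mul_sq (a : ℝ) {t : ℝ} (ht : 0 < t) :
    ∫ x in Ioi 0, t * exp (-((x ^ 2 + a ^ 2) / 2) * t ^ 2)
      = √(2 * π) / 2 * exp (-(a * t) ^ 2 / 2) := by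
  simp only [exp_neg_sq_add_sq_mul_sq a t, integral_const_mul, integral_gaussian_Ioi]
  rw [div_div_eq_mul_div, sqrt_div' _ (sq_nonneg t), sqrt_sq ht.le, mul_comm π 2]
  field_simp

theorem integrable_mul_exp_neg_sq_add_sq_mul_sq {a : ℝ} (ha : a ≠ 0) :
    Integrable (Function.uncurry fun x t ↦ t * exp (-((x ^ 2 + a ^ 2) / 2) * t ^ 2))
      ((volume.restrict (Ioi 0)).prod (volume.restrict (Ioi 1))) := by
  refine (integrable_prod_iff' (Continuous.aestronglyMeasurable (by fun_prop))).2 ⟨?_, ?_⟩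
  · refine (ae_restrict_iff' measurableSet_Ioi).2 (.of_forall fun t ht ↦ ?_)
    have ht0 : 0 < t ^ 2 / 2 := by nlinarith [ht.out]
    simp only [Function.uncurry_apply_pair, exp_neg_sq_add_sq_mul_sq a t]
    exact (((integrable_exp_neg_mul_sq ht0).const_mul _).const_mul t).integrableOn
  · have hint : IntegrableOn (fun t ↦ √(2 * π) / 2 * exp (-(a * t) ^ 2 / 2)) (Ioi 1) :=
      ((integrable_exp_neg_sq_div_two.comp_mul_left' ha).const_mul _).integrableOn
    refine hint.congr_fun (fun t ht ↦ ?_) measurableSet_Ioi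
    have ht0 : 0 < t := zero_lt_one.trans ht
    simp only [Function.uncurry_apply_pair, norm_mul, norm_of_nonneg ht0.le,
      norm_of_nonneg (exp_pos _).le, ← integral_Ioi_zero_mul_exp_neg_sq_add_sq_mul_sq a ht0]

theorem integrableOn_exp_neg_sq_add_sq_div_sq_add_sq {a : ℝ} (ha : a ≠ 0) :
    IntegrableOn (fun x ↦ exp (-(x ^ 2 + a ^ 2) / 2) / (x ^ 2 + a ^ 2)) (Ioi 0) := by
  simp only [fun x ↦ exp_neg_half_div_eq_integral_Ioi_one (c := x ^ 2 + a ^ 2) (by positivity)]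
  exact (integrable_mul_exp_neg_sq_add_sq_mul_sq ha).integral_prod_left

theorem integral_exp_neg_sq_add_sq_div_sq_add_sq {a : ℝ} (ha : a ≠ 0) :
    ∫ x in Ioi 0, exp (-(x ^ 2 + a ^ 2) / 2) / (x ^ 2 + a ^ 2) = π / |a| * gaussCdf (-|a|) := by
  calc ∫ x in Ioi 0, exp (-(x ^ 2 + a ^ 2) / 2) / (x ^ 2 + a ^ 2)
      = ∫ x in Ioi 0, ∫ t in Ioi 1, t * exp (-((x ^ 2 + a ^ 2) / 2) * t ^ 2) := by
        simp only [fun x ↦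
          exp_neg_half_div_eq_integral_Ioi_one (c := x ^ 2 + a ^ 2) (by positivity)]
    _ = ∫ t in Ioi 1, ∫ x in Ioi 0, t * exp (-((x ^ 2 + a ^ 2) / 2) * t ^ 2) :=
        integral_integral_swap (integrable_mul_exp_neg_sq_add_sq_mul_sq ha)
    _ = ∫ t in Ioi 1, √(2 * π) / 2 * exp (-(|a| * t) ^ 2 / 2) :=
        setIntegral_congr_fun measurableSet_Ioi fun t ht ↦ by
          rw [integral_Ioi_zero_mul_exp_neg_sq_add_sq_mul_sq a (zero_lt_one.trans ht), mul_pow,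
            mul_pow, sq_abs]
    _ = √(2 * π) / 2 * (|a|⁻¹ * ∫ w in Ioi |a|, exp (-w ^ 2 / 2)) := by
        rw [integral_const_mul, integral_comp_mul_left_Ioi (fun w ↦ exp (-w ^ 2 / 2)) 1
          (abs_pos.2 ha), mul_one, smul_eq_mul]
    _ = π / |a| * gaussCdf (-|a|) := by
        have hπ : √(2 * π) ^ 2 = 2 * π := sq_sqrt (by positivity)
        rw [gaussCdf_neg]
        generalize ∫ w in Ioi |a|, exp (-w ^ 2 / 2) = I
        field_simp
        linear_combination I * hπ

theorem integral_exp_mul_sqrt_sq_sub_sq_div {a : ℝ} (ha : a ≠ 0) :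
    ∫ s in Ioi |a|, exp (-s ^ 2 / 2) * (2 * √(s ^ 2 - a ^ 2) / s)
      = √(2 * π) * exp (-a ^ 2 / 2) - 2 * π * |a| * gaussCdf (-|a|) := by
  have hsplit : ∀ x, exp (-(x ^ 2 + a ^ 2) / 2) = exp (-a ^ 2 / 2) * exp (-x ^ 2 / 2) := fun x ↦ by
    rw [← exp_add]; ring_nf
  have hint : IntegrableOn (fun x ↦ 2 * exp (-(x ^ 2 + a ^ 2) / 2)) (Ioi 0) := by
    simp only [hsplit]
    exact ((integrable_exp_neg_sq_div_two.const_mul _).const_mul _).integrableOn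
  rw [← integral_comp_sqrt_sq_add_sq_Ioi]
  calc ∫ x in Ioi 0, (x / √(x ^ 2 + a ^ 2)) •
        (exp (-√(x ^ 2 + a ^ 2) ^ 2 / 2) * (2 * √(√(x ^ 2 + a ^ 2) ^ 2 - a ^ 2) / √(x ^ 2 + a ^ 2)))
      = ∫ x in Ioi 0, (2 * exp (-(x ^ 2 + a ^ 2) / 2)
          - 2 * a ^ 2 * (exp (-(x ^ 2 + a ^ 2) / 2) / (x ^ 2 + a ^ 2))) := by
        refine setIntegral_congr_fun measurableSet_Ioi fun x hx ↦ ?_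
        have hpos : 0 < x ^ 2 + a ^ 2 := by positivity
        have hR : √(x ^ 2 + a ^ 2) ^ 2 = x ^ 2 + a ^ 2 := sq_sqrt hpos.le
        have hR0 : √(x ^ 2 + a ^ 2) ≠ 0 := (sqrt_pos.2 hpos).ne'
        rw [hR, add_sub_cancel_right, sqrt_sq hx.out.le, smul_eq_mul]
        field_simp
        linear_combination (-x ^ 2) * hR
    _ = √(2 * π) * exp (-a ^ 2 / 2) - 2 * π * |a| * gaussCdf (-|a|) := by
        rw [integral_sub hint ((integrableOn_exp_neg_sq_add_sq_div_sq_add_sq ha).const_mul _),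
          integral_const_mul, integral_const_mul, integral_exp_neg_sq_add_sq_div_sq_add_sq ha]
        simp only [hsplit, integral_const_mul, integral_Ioi_zero_exp_neg_sq_div_two]
        rw [← sq_abs a]
        field_simp

/-- For every `y ≠ 0`,
`∫_{|y|}^∞ Φ(-s) · (2y²)/(s²√(s²-y²)) ds = e^{-y²/2} - √(2π)·|y|·Φ(-|y|)`. -/
theorem integral_gaussCdf_kernel (y : ℝ) (hy : y ≠ 0) :
    (∫ s in Set.Ioi |y|, gaussCdf (-s) * (2 * y ^ 2) / (s ^ 2 * Real.sqrt (s ^ 2 - y ^ 2)))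
      = Real.exp (-y ^ 2 / 2) - Real.sqrt (2 * Real.pi) * |y| * gaussCdf (-|y|) := by
  have hcont : ContinuousWithinAt (fun s ↦ 2 * √(s ^ 2 - y ^ 2) / s) (Ici |y|) |y| :=
    ((by fun_prop : Continuous fun s ↦ 2 * √(s ^ 2 - y ^ 2)).continuousAt.div continuousAt_id
      (abs_pos.2 hy).ne').continuousWithinAt
  have hkernel : ∀ s ∈ Ioi |y|, 0 ≤ 2 * y ^ 2 / (s ^ 2 * √(s ^ 2 - y ^ 2)) :=
    fun _ _ ↦ by positivity
  simp only [mul_div_assoc (gaussCdf _)]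
  rw [integral_gaussCdf_neg_mul_deriv hcont (fun s hs ↦ hasDerivAt_sqrt_sq_sub_sq_div hs) hkernel
    (tendsto_sqrt_sq_sub_sq_div_atTop y), integral_exp_mul_sqrt_sq_sub_sq_div hy, sq_abs,
    sub_self, sqrt_zero]
  have hπ : √(2 * π) ^ 2 = 2 * π := sq_sqrt (by positivity)
  field_simp
  linear_combination |y| ^ 2 * gaussCdf (-|y|) * hπ
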